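/- Let S = k[x₀,x₁,x₂,…,x_n], let I ⊆ S be a squarefree monomial ideal, and let J ⊆ S be its Alexander dual. Let S₁ = k[x,x₂,…,x_n] and π : S → S₁ the ring map with x₀,x₁ ↦ x and x_i ↦ x_i for i ≥ 2; let I₁, J₁ ⊆ S₁ be the ideals generated by π(I), π(J) respectively. If x₁ − x₀ is a regular element (nonzerodivisor) on S/I and I₁ is a squarefree monomial ideal, then J₁ is the Alexander dual of I₁; explicitly, a monomial m of S₁ lies in J₁ if and only if m has a nontrivial common divisor with every monomial of I₁. -/

import Mathlib

/-!
The Alexander dual of the ideal generated by the `x ^ a`, `a ∈ G`, is generated by the `x ^ c`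
with `c` a transversal of `G` (its support meets every `a ∈ G`), and the image of a monomial ideal
under `x₀, x₁ ↦ x` is generated by the images of its generators. So it suffices to lift a
transversal `d` of the image of `G` to a transversal of `G` whose image is at most `d`. The preimage `D` of the
support of `d` meets every `a ∈ G`, and as `g` is injective away from `x₀` and away from `x₁`, it
suffices that `D \ {x₀}` or `D \ {x₁}` still meets every `a`. Otherwise some generator `x₀ a'`
meets `D` only in `x₀` and some `x₁ b'` only in `x₁`; since
`(x₁ - x₀) a' b' = x₁ b' · a' - x₀ a' · b' ∈ I` and `x₁ - x₀` is regular, `a' b' ∈ I`; a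
generator dividing `a' b'` meets `D`, although, the generators being squarefree, `a'` and `b'` do
not: a contradiction.
-/

open Set
open Finsupp (mapDomain)

section

variable {σ τ : Type*}

def IsTransversal (G : Set (σ →₀ ℕ)) (c : σ →₀ ℕ) : Prop :=
  ∀ a ∈ G, ∃ v ∈ c.support, v ∈ a.support

namespace IsTransversal

variable {G : Set (σ →₀ ℕ)} {c d : σ →₀ ℕ}

theorem mono (hc : IsTransversal G c) (hcd : c ≤ d) : IsTransversal G d := fun a ha => by
  obtain ⟨v, hvc, hva⟩ := hc a ha
  exact ⟨v, Finsupp.support_mono hcd hvc, hva⟩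

theorem mapDomain (hc : IsTransversal G c) (g : σ → τ) :
    IsTransversal (mapDomain g '' G) (mapDomain g c) := by
  classical
  rintro _ ⟨a, ha, rfl⟩
  obtain ⟨v, hvc, hva⟩ := hc a ha
  simp only [Finsupp.mapDomain_support_of_subsingletonAddUnits]
  exact ⟨g v, Finset.mem_image_of_mem g hvc, Finset.mem_image_of_mem g hva⟩

end IsTransversal

theorem Finsupp.exists_mapDomain_le_of_injOn {g : σ → τ} {s : Set σ} (hg : s.InjOn g)
    (d : τ →₀ ℕ) : ∃ c : σ →₀ ℕ, mapDomain g c ≤ d ∧ ∀ v ∈ s, g v ∈ d.support → v ∈ c.support := by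
  classical
  have hinj : Function.Injective (g ∘ Subtype.val : s → τ) := hg.injective
  set c' : s →₀ ℕ := Finsupp.comapDomain _ d hinj.injOn
  refine ⟨mapDomain Subtype.val c', fun w => ?_, fun v hv hvd => ?_⟩
  · rw [← Finsupp.mapDomain_comp]
    by_cases hw : w ∈ range (g ∘ Subtype.val : s → τ)
    · obtain ⟨v, rfl⟩ := hw
      rw [Finsupp.mapDomain_apply hinj, Finsupp.comapDomain_apply]
    · rw [Finsupp.mapDomain_of_notMem_range _ _ hw]
      exact zero_le
  · rw [Finsupp.mem_support_iff, ← Subtype.coe_mk v hv,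
      Finsupp.mapDomain_apply Subtype.val_injective, Finsupp.comapDomain_apply]
    exact Finsupp.mem_support_iff.mp hvd

theorem forall_exists_mem_diff_singleton_or {G : Set (σ →₀ ℕ)} {i₀ i₁ : σ}
    (hG : ∀ a ∈ G, ∀ b ∈ G, i₀ ∈ a.support → i₁ ∈ b.support →
      ∃ c ∈ G, c ≤ a.erase i₀ + b.erase i₁)
    {D : Set σ} (hD : ∀ a ∈ G, ∃ v ∈ a.support, v ∈ D) :
    (∀ a ∈ G, ∃ v ∈ a.support, v ∈ D \ {i₀}) ∨ (∀ a ∈ G, ∃ v ∈ a.support, v ∈ D \ {i₁}) := by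
  classical
  by_contra! h
  obtain ⟨⟨a, ha, haD⟩, ⟨b, hb, hbD⟩⟩ := h
  have only_i₀ : ∀ v ∈ a.support, v ∈ D → v = i₀ := fun v hv hvD => by
    by_contra hne; exact haD v hv ⟨hvD, hne⟩
  have only_i₁ : ∀ v ∈ b.support, v ∈ D → v = i₁ := fun v hv hvD => by
    by_contra hne; exact hbD v hv ⟨hvD, hne⟩
  have ha₀ : i₀ ∈ a.support := by
    obtain ⟨v, hv, hvD⟩ := hD a ha
    rwa [← only_i₀ v hv hvD]
  have hb₁ : i₁ ∈ b.support := by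
    obtain ⟨v, hv, hvD⟩ := hD b hb
    rwa [← only_i₁ v hv hvD]
  obtain ⟨c, hc, hcab⟩ := hG a ha b hb ha₀ hb₁
  obtain ⟨v, hvc, hvD⟩ := hD c hc
  rcases Finset.mem_union.mp (Finsupp.support_add (Finsupp.support_mono hcab hvc)) with hv | hv
  · rw [Finsupp.support_erase, Finset.mem_erase] at hv
    exact hv.1 (only_i₀ v hv.2 hvD)
  · rw [Finsupp.support_erase, Finset.mem_erase] at hv
    exact hv.1 (only_i₁ v hv.2 hvD)

theorem isTransversal_mapDomain_image_iff {G : Set (σ →₀ ℕ)} {i₀ i₁ : σ}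
    (hG : ∀ a ∈ G, ∀ b ∈ G, i₀ ∈ a.support → i₁ ∈ b.support →
      ∃ c ∈ G, c ≤ a.erase i₀ + b.erase i₁)
    {g : σ → τ} (hg₀ : InjOn g {i₀}ᶜ) (hg₁ : InjOn g {i₁}ᶜ) (d : τ →₀ ℕ) :
    IsTransversal (mapDomain g '' G) d ↔ ∃ c, IsTransversal G c ∧ mapDomain g c ≤ d := by
  refine ⟨fun hd => ?_, fun ⟨c, hc, hcd⟩ => (hc.mapDomain g).mono hcd⟩
  classical
  have hD : ∀ a ∈ G, ∃ v ∈ a.support, v ∈ g ⁻¹' d.support := fun a ha => by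
    obtain ⟨w, hwd, hwa⟩ := hd _ ⟨a, ha, rfl⟩
    rw [Finsupp.mapDomain_support_of_subsingletonAddUnits, Finset.mem_image] at hwa
    obtain ⟨v, hva, rfl⟩ := hwa
    exact ⟨v, hva, hwd⟩
  have lift : ∀ j, InjOn g {j}ᶜ → (∀ a ∈ G, ∃ v ∈ a.support, v ∈ g ⁻¹' d.support \ {j}) →
      ∃ c, IsTransversal G c ∧ mapDomain g c ≤ d := fun j hj hGj => by
    obtain ⟨c, hcd, hc⟩ := Finsupp.exists_mapDomain_le_of_injOn hj d
    refine ⟨c, fun a ha => ?_, hcd⟩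
    obtain ⟨v, hva, hvd, hvj⟩ := hGj a ha
    exact ⟨v, hc v hvj hvd, hva⟩
  rcases forall_exists_mem_diff_singleton_or hG hD with h | h
  exacts [lift i₀ hg₀ h, lift i₁ hg₁ h]

theorem Ideal.mul_mem_of_mul_mem_of_sub_regular {R : Type*} [CommRing R] {I : Ideal R}
    {a b p q : R} (hreg : ∀ f, (b - a) * f ∈ I → f ∈ I) (hp : a * p ∈ I) (hq : b * q ∈ I) :
    p * q ∈ I := by
  apply hreg
  rw [show (b - a) * (p * q) = (b * q) * p - (a * p) * q by ring]
  exact I.sub_mem (I.mul_mem_right p hq) (I.mul_mem_right q hp)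

namespace MvPolynomial

variable {R : Type*}

theorem monomial_one_mem_span_monomial_one_image_iff [CommSemiring R] [Nontrivial R]
    {G : Set (σ →₀ ℕ)} {e : σ →₀ ℕ} :
    monomial e (1 : R) ∈ Ideal.span ((fun d => monomial d (1 : R)) '' G) ↔ ∃ a ∈ G, a ≤ e := by
  classical
  simp [mem_ideal_span_monomial_image, support_monomial]

theorem map_rename_span_monomial_one_image [CommSemiring R] (g : σ → τ) (G : Set (σ →₀ ℕ)) :
    Ideal.map (rename g) (Ideal.span ((fun d => monomial d (1 : R)) '' G)) =
      Ideal.span ((fun d => monomial d (1 : R)) '' (mapDomain g '' G)) := by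
  rw [Ideal.map_span, image_image, image_image]
  simp only [rename_monomial]

theorem isTransversal_setOf_monomial_one_mem_span_iff (R : Type*) [CommSemiring R] [Nontrivial R]
    {G : Set (σ →₀ ℕ)} {d : σ →₀ ℕ} :
    IsTransversal {e | monomial e (1 : R) ∈ Ideal.span ((fun d => monomial d (1 : R)) '' G)} d ↔
      IsTransversal G d := by
  simp only [IsTransversal, mem_ofPred_eq, monomial_one_mem_span_monomial_one_image_iff]
  refine ⟨fun h a ha => h a ⟨a, ha, le_rfl⟩, fun h e ⟨a, ha, hae⟩ => ?_⟩
  obtain ⟨v, hvd, hva⟩ := h a ha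
  exact ⟨v, hvd, Finsupp.support_mono hae hva⟩

theorem exists_le_erase_add_erase_of_sub_regular [CommRing R] [Nontrivial R]
    {G : Set (σ →₀ ℕ)} (hsq : ∀ a ∈ G, ∀ v, a v ≤ 1) {i₀ i₁ : σ}
    (hreg : ∀ f : MvPolynomial σ R, (X i₁ - X i₀) * f ∈ Ideal.span ((fun d => monomial d 1) '' G) →
      f ∈ Ideal.span ((fun d => monomial d 1) '' G)) :
    ∀ a ∈ G, ∀ b ∈ G, i₀ ∈ a.support → i₁ ∈ b.support → ∃ c ∈ G, c ≤ a.erase i₀ + b.erase i₁ := by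
  have hsplit : ∀ a ∈ G, ∀ i ∈ a.support,
      X i * monomial (a.erase i) (1 : R) ∈ Ideal.span ((fun d => monomial d 1) '' G) := by
    intro a ha i hi
    have hai : a i = 1 := le_antisymm (hsq a ha i) (Nat.one_le_iff_ne_zero.mpr (by simpa using hi))
    rw [X, monomial_mul, one_mul, ← hai, Finsupp.single_add_erase]
    exact Ideal.subset_span ⟨a, ha, rfl⟩
  intro a ha b hb ha₀ hb₁
  have hmul : monomial (a.erase i₀ + b.erase i₁) (1 : R) =
      monomial (a.erase i₀) 1 * monomial (b.erase i₁) 1 := by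
    rw [monomial_mul, one_mul]
  rw [← monomial_one_mem_span_monomial_one_image_iff (R := R), hmul]
  exact Ideal.mul_mem_of_mul_mem_of_sub_regular hreg (hsplit a ha i₀ ha₀) (hsplit b hb i₁ hb₁)

end MvPolynomial

end

open MvPolynomial

theorem injOn_compl_of_val_le_one {n : ℕ} {g : Fin (n + 1) → Fin n}
    (hg : ∀ i : Fin (n + 1), (g i : ℕ) = if (i : ℕ) ≤ 1 then 0 else (i : ℕ) - 1)
    {j : Fin (n + 1)} (hj : (j : ℕ) ≤ 1) : InjOn g {j}ᶜ := by
  intro v hv w hw hvw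
  have hv' : (v : ℕ) ≠ j := Fin.val_ne_of_ne hv
  have hw' : (w : ℕ) ≠ j := Fin.val_ne_of_ne hw
  have := congrArg Fin.val hvw
  rw [hg, hg] at this
  ext
  split_ifs at this <;> omega

theorem alexander_duality_descends_general
    (k : Type*) [Field k] (n : ℕ)
    (I : Ideal (MvPolynomial (Fin (n + 1)) k))
    (hIsqfree : ∃ G : Set (Fin (n + 1) →₀ ℕ), (∀ d ∈ G, ∀ v, d v ≤ 1) ∧
      I = Ideal.span ((fun d => monomial d (1 : k)) '' G))
    (J : Ideal (MvPolynomial (Fin (n + 1)) k))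
    (hJ : J = Ideal.span { m : MvPolynomial (Fin (n + 1)) k |
      ∃ d : Fin (n + 1) →₀ ℕ,
        (∀ e : Fin (n + 1) →₀ ℕ, monomial e (1 : k) ∈ I →
          ∃ v, v ∈ d.support ∧ v ∈ e.support) ∧
        m = monomial d (1 : k) })
    (g : Fin (n + 1) → Fin n)
    (hg : ∀ i : Fin (n + 1), (g i : ℕ) = if (i : ℕ) ≤ 1 then 0 else (i : ℕ) - 1)
    (hreg : ∀ f : MvPolynomial (Fin (n + 1)) k, (X 1 - X 0) * f ∈ I → f ∈ I) :
    ∀ d : Fin n →₀ ℕ,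
      monomial d (1 : k) ∈ Ideal.map (rename g) J ↔
        ∀ e : Fin n →₀ ℕ, monomial e (1 : k) ∈ Ideal.map (rename g) I →
          ∃ v, v ∈ d.support ∧ v ∈ e.support := by
  obtain ⟨G, hGsq, rfl⟩ := hIsqfree
  have hJG : J = Ideal.span ((fun c => monomial c (1 : k)) '' {c | IsTransversal G c}) := by
    rw [hJ]
    congr 1
    ext m
    simp only [← isTransversal_setOf_monomial_one_mem_span_iff k (G := G), mem_ofPred_eq,
      mem_image, eq_comm (a := m)]
    rfl
  have hexch := exists_le_erase_add_erase_of_sub_regular hGsq hreg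
  have hg₀ := injOn_compl_of_val_le_one hg (j := 0) (by simp)
  have hg₁ := injOn_compl_of_val_le_one hg (j := 1) (by rw [Fin.val_one']; exact Nat.mod_le _ _)
  intro d
  rw [hJG, map_rename_span_monomial_one_image, monomial_one_mem_span_monomial_one_image_iff,
    map_rename_span_monomial_one_image]
  simp only [exists_mem_image, mem_ofPred_eq]
  exact ((isTransversal_setOf_monomial_one_mem_span_iff k).trans
    (isTransversal_mapDomain_image_iff hexch hg₀ hg₁ d)).symm

/-- If `x₁ - x₀` is regular on `S/I` and the image `I₁` of `I` under `x₀,x₁ ↦ x` is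
squarefree, then the image `J₁` of the Alexander dual `J` of `I` is the Alexander dual
of `I₁`: a monomial lies in `J₁` iff it has a nontrivial common divisor with every
monomial of `I₁`. -/
theorem alexander_duality_descends
    (k : Type*) [Field k] (n : ℕ) (hn : 1 ≤ n)
    (I : Ideal (MvPolynomial (Fin (n + 1)) k))
    (hIsqfree : ∃ G : Set (Fin (n + 1) →₀ ℕ), (∀ d ∈ G, ∀ v, d v ≤ 1) ∧
      I = Ideal.span ((fun d => monomial d (1 : k)) '' G))
    (J : Ideal (MvPolynomial (Fin (n + 1)) k))
    (hJ : J = Ideal.span { m : MvPolynomial (Fin (n + 1)) k |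
      ∃ d : Fin (n + 1) →₀ ℕ,
        (∀ e : Fin (n + 1) →₀ ℕ, monomial e (1 : k) ∈ I →
          ∃ v, v ∈ d.support ∧ v ∈ e.support) ∧
        m = monomial d (1 : k) })
    (g : Fin (n + 1) → Fin n)
    (hg : ∀ i : Fin (n + 1), (g i : ℕ) = if (i : ℕ) ≤ 1 then 0 else (i : ℕ) - 1)
    (hreg : ∀ f : MvPolynomial (Fin (n + 1)) k, (X 1 - X 0) * f ∈ I → f ∈ I)
    (hI₁sqfree : ∃ G₁ : Set (Fin n →₀ ℕ), (∀ d ∈ G₁, ∀ v, d v ≤ 1) ∧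
      Ideal.map (rename g) I = Ideal.span ((fun d => monomial d (1 : k)) '' G₁)) :
    ∀ d : Fin n →₀ ℕ,
      monomial d (1 : k) ∈ Ideal.map (rename g) J ↔
        ∀ e : Fin n →₀ ℕ, monomial e (1 : k) ∈ Ideal.map (rename g) I →
          ∃ v, v ∈ d.support ∧ v ∈ e.support :=
  alexander_duality_descends_general k n I hIsqfree J hJ g hg hreg
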